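/- arXiv:2004.11330 — 2 statements merged into one kernel-verified Lean document; each statement's English description precedes it below -/
import Mathlib

section
/- Let u be of class C³ on a neighborhood of q ∈ ℝ², let f be of class C¹, and suppose −Δu = f(u) on this neighborhood. If u_x(q) = u_xx(q) = u_xy(q) = 0, then the Jacobian determinant of T at q equals −u_y(q)² (u_xxy(q)² + u_xxx(q)²). In particular det DT(q) ≤ 0, and det DT(q) < 0 if and only if u_y(q) ≠ 0 and (u_xxx(q), u_xxy(q)) ≠ (0,0). -/
open Real Set MeasureTheory

noncomputable section

/-- Partial derivative in the `x` direction. -/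
def pdx (u : ℝ × ℝ → ℝ) (q : ℝ × ℝ) : ℝ := fderiv ℝ u q (1, 0)

/-- Partial derivative in the `y` direction. -/
def pdy (u : ℝ × ℝ → ℝ) (q : ℝ × ℝ) : ℝ := fderiv ℝ u q (0, 1)

/-- Curvature of the level set of `u`:
`𝔎 = −(u_yy u_x² − 2 u_xy u_x u_y + u_xx u_y²)/|∇u|³`. -/
def crv (u : ℝ × ℝ → ℝ) (q : ℝ × ℝ) : ℝ :=
  -(pdy (pdy u) q * (pdx u q) ^ 2 - 2 * pdy (pdx u) q * pdx u q * pdy u q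
      + pdx (pdx u) q * (pdy u q) ^ 2) / (Real.sqrt ((pdx u q) ^ 2 + (pdy u q) ^ 2)) ^ 3

/-- The vector field
`T(q) = (u_yy u_x − u_xy u_y, u_xx u_y − u_xy u_x)(q)`. -/
def Tvec (u : ℝ × ℝ → ℝ) (q : ℝ × ℝ) : ℝ × ℝ :=
  (pdy (pdy u) q * pdx u q - pdy (pdx u) q * pdy u q,
   pdx (pdx u) q * pdy u q - pdy (pdx u) q * pdx u q)

/-- Directional derivative `u_θ = ⟨∇u, e_θ⟩`, `e_θ = (cos θ, sin θ)`. -/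
def dird (u : ℝ × ℝ → ℝ) (θ : ℝ) (q : ℝ × ℝ) : ℝ :=
  Real.cos θ * pdx u q + Real.sin θ * pdy u q

/-- `f` is of class `C^{1,α}` for some `α ∈ (0,1]` (locally Hölder derivative). -/
def C1Alpha (f : ℝ → ℝ) : Prop :=
  ContDiff ℝ 1 f ∧ ∃ α : NNReal, 0 < α ∧ α ≤ 1 ∧
    ∀ s : Set ℝ, IsCompact s → ∃ C : NNReal, HolderOnWith C α (deriv f) s

/-- `Ω` has smooth (`C^∞`) boundary: there is a global smooth defining function. -/
def SmoothBoundary (Ω : Set (ℝ × ℝ)) : Prop :=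
  ∃ ρ : ℝ × ℝ → ℝ, ContDiff ℝ (⊤ : ℕ∞) ρ ∧ Ω = {p | ρ p < 0} ∧
    ∀ p ∈ frontier Ω, ρ p = 0 ∧ fderiv ℝ ρ p ≠ 0

/-- `u ∈ C^k(cl Ω)`: `u` is `C^k` on an open neighborhood of the closure of `Ω`. -/
def ContDiffNearClosure (k : ℕ) (Ω : Set (ℝ × ℝ)) (u : ℝ × ℝ → ℝ) : Prop :=
  ∃ V : Set (ℝ × ℝ), IsOpen V ∧ closure Ω ⊆ V ∧ ContDiffOn ℝ k u V

/-- `u` solves problem (1.1): `u ∈ C³(cl Ω)`, `−Δu = f(u)` and `u > 0` in `Ω`,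
`u = 0` on `∂Ω`. -/
def SolvesPb (Ω : Set (ℝ × ℝ)) (f : ℝ → ℝ) (u : ℝ × ℝ → ℝ) : Prop :=
  ContDiffNearClosure 3 Ω u ∧
  (∀ q ∈ Ω, pdx (pdx u) q + pdy (pdy u) q = -f (u q)) ∧
  (∀ q ∈ Ω, 0 < u q) ∧
  (∀ q ∈ frontier Ω, u q = 0)

/-- `u` is semi-stable: `∫_Ω |∇φ|² − ∫_Ω f′(u) φ² ≥ 0` for all `φ ∈ C_c^∞(Ω)`. -/
def SemiStable (Ω : Set (ℝ × ℝ)) (f : ℝ → ℝ) (u : ℝ × ℝ → ℝ) : Prop :=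
  ∀ φ : ℝ × ℝ → ℝ, ContDiff ℝ (⊤ : ℕ∞) φ → HasCompactSupport φ → tsupport φ ⊆ Ω →
    0 ≤ (∫ x in Ω, ‖fderiv ℝ φ x‖ ^ 2) - ∫ x in Ω, deriv f (u x) * φ x ^ 2

/-- Jacobian determinant of a map `T : ℝ² → ℝ²`. -/
def jdet (T : ℝ × ℝ → ℝ × ℝ) (q : ℝ × ℝ) : ℝ :=
  (fderiv ℝ T q (1, 0)).1 * (fderiv ℝ T q (0, 1)).2
    - (fderiv ℝ T q (0, 1)).1 * (fderiv ℝ T q (1, 0)).2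

/-! At a point where `u_x = u_xx = u_xy = 0`, the product rule leaves only the terms of `DT`
carrying `u_y`, so `det DT = -u_y² (u_xyx u_xxy - u_xyy u_xxx)`. Schwarz's theorem gives
`u_xyx = u_xxy`, and differentiating `u_xx + u_yy = -f(u)` in `x` gives
`u_xxx + u_yyx = -f'(u) u_x = 0`, i.e. `u_xyy = -u_xxx`. -/

open Filter Topology

section PartialDerivatives

variable {u g : ℝ × ℝ → ℝ} {q : ℝ × ℝ}

lemma ContDiffAt.pdx {n : WithTop ℕ∞} (hu : ContDiffAt ℝ (n + 1) u q) :
    ContDiffAt ℝ n (pdx u) q :=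
  (hu.fderiv_right le_rfl).clm_apply contDiffAt_const

lemma ContDiffAt.pdy {n : WithTop ℕ∞} (hu : ContDiffAt ℝ (n + 1) u q) :
    ContDiffAt ℝ n (pdy u) q :=
  (hu.fderiv_right le_rfl).clm_apply contDiffAt_const

lemma pdx_pdy_comm (hg : ContDiffAt ℝ 2 g q) : pdx (pdy g) q = pdy (pdx g) q := by
  have hd : DifferentiableAt ℝ (fderiv ℝ g) q :=
    (hg.fderiv_right (m := 1) (by norm_num)).differentiableAt one_ne_zero
  have hsecond (v w : ℝ × ℝ) :
      fderiv ℝ (fun p => fderiv ℝ g p v) q w = fderiv ℝ (fderiv ℝ g) q w v := by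
    rw [fderiv_clm_apply hd (differentiableAt_const _)]
    simp
  exact (hsecond _ _).trans ((hg.isSymmSndFDerivAt (by simp)) _ _ |>.trans (hsecond _ _).symm)

lemma pdy_pdy_pdx_eq_pdx_pdy_pdy (hu : ContDiffAt ℝ 3 u q) :
    pdy (pdy (pdx u)) q = pdx (pdy (pdy u)) q := by
  have hcomm : pdy (pdx u) =ᶠ[𝓝 q] pdx (pdy u) := by
    filter_upwards [hu.eventually (by simp)] with p hp
    exact (pdx_pdy_comm (hp.of_le (by norm_num))).symm
  calc pdy (pdy (pdx u)) q = pdy (pdx (pdy u)) q := by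
        simp only [_root_.pdy, hcomm.fderiv_eq]
    _ = pdx (pdy (pdy u)) q := (pdx_pdy_comm hu.pdy).symm

lemma pdx_laplacian_eq {f : ℝ → ℝ} (hu : ContDiffAt ℝ 3 u q) (hf : DifferentiableAt ℝ f (u q))
    (hpde : (fun p => pdx (pdx u) p + pdy (pdy u) p) =ᶠ[𝓝 q] fun p => -f (u p)) :
    pdx (pdx (pdx u)) q + pdx (pdy (pdy u)) q = -(deriv f (u q) * pdx u q) := by
  have hux : ContDiffAt ℝ 2 (pdx u) q := hu.pdx
  have huy : ContDiffAt ℝ 2 (pdy u) q := hu.pdy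
  have hxx : DifferentiableAt ℝ (pdx (pdx u)) q := hux.pdx.differentiableAt one_ne_zero
  have hyy : DifferentiableAt ℝ (pdy (pdy u)) q := huy.pdy.differentiableAt one_ne_zero
  have hfu : HasFDerivAt (fun p => -f (u p)) (-(deriv f (u q) • fderiv ℝ u q)) q :=
    (hf.hasDerivAt.comp_hasFDerivAt q (hu.differentiableAt (by norm_num)).hasFDerivAt).neg
  have hderiv := congrArg (· (1, 0))
    ((fderiv_add hxx hyy).symm.trans (hpde.fderiv_eq.trans hfu.fderiv))
  simpa [_root_.pdx] using hderiv

lemma jdet_Tvec_of_pdx_eq_zero (hu : ContDiffAt ℝ 3 u q)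
    (hx : pdx u q = 0) (hxx : pdx (pdx u) q = 0) (hxy : pdy (pdx u) q = 0) :
    jdet (Tvec u) q = -(pdy u q) ^ 2 *
      (pdx (pdy (pdx u)) q * pdy (pdx (pdx u)) q - pdy (pdy (pdx u)) q * pdx (pdx (pdx u)) q) := by
  have hux : ContDiffAt ℝ 2 (pdx u) q := hu.pdx
  have huy : ContDiffAt ℝ 2 (pdy u) q := hu.pdy
  have dx : DifferentiableAt ℝ (pdx u) q := hux.differentiableAt (by norm_num)
  have dy : DifferentiableAt ℝ (pdy u) q := huy.differentiableAt (by norm_num)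
  have dxx : DifferentiableAt ℝ (pdx (pdx u)) q := hux.pdx.differentiableAt one_ne_zero
  have dxy : DifferentiableAt ℝ (pdy (pdx u)) q := hux.pdy.differentiableAt one_ne_zero
  have dyy : DifferentiableAt ℝ (pdy (pdy u)) q := huy.pdy.differentiableAt one_ne_zero
  have hT : HasFDerivAt (Tvec u) _ q :=
    ((dyy.hasFDerivAt.mul dx.hasFDerivAt).sub (dxy.hasFDerivAt.mul dy.hasFDerivAt)).prodMk
      ((dxx.hasFDerivAt.mul dy.hasFDerivAt).sub (dxy.hasFDerivAt.mul dx.hasFDerivAt))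
  have px (g : ℝ × ℝ → ℝ) : fderiv ℝ g q (1, 0) = pdx g q := rfl
  have py (g : ℝ × ℝ → ℝ) : fderiv ℝ g q (0, 1) = pdy g q := rfl
  simp only [jdet, hT.fderiv, ContinuousLinearMap.prod_apply, sub_apply, smul_apply, smul_eq_mul,
    px, py, hx, hxx, hxy, zero_smul, add_zero, zero_add, sub_zero, mul_zero, zero_sub, neg_mul,
    sub_neg_eq_add]
  ring

end PartialDerivatives

lemma neg_sq_mul_sq_add_sq_nonpos (a b c : ℝ) : -a ^ 2 * (b ^ 2 + c ^ 2) ≤ 0 := by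
  rw [neg_mul]
  exact neg_nonpos.mpr (by positivity)

lemma neg_sq_mul_sq_add_sq_neg_iff {a b c : ℝ} :
    -a ^ 2 * (b ^ 2 + c ^ 2) < 0 ↔ a ≠ 0 ∧ (c, b) ≠ (0, 0) := by
  rw [(neg_sq_mul_sq_add_sq_nonpos a b c).lt_iff_ne, ne_eq, mul_eq_zero, neg_eq_zero,
    add_eq_zero_iff_of_nonneg (sq_nonneg _) (sq_nonneg _), not_or, ne_eq, ne_eq,
    Prod.mk.injEq, and_comm (a := c = 0)]
  simp only [pow_eq_zero_iff two_ne_zero]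

/-- at a point where `u_x = u_xx = u_xy = 0` one has
`det DT = −u_y² (u_xxy² + u_xxx²) ≤ 0`, with strict inequality iff `u_y ≠ 0`
and `(u_xxx, u_xxy) ≠ (0,0)`. -/
theorem jdet_Tvec_at_semidegenerate_point
    (U : Set (ℝ × ℝ)) (u : ℝ × ℝ → ℝ) (f : ℝ → ℝ) (q : ℝ × ℝ)
    (hU : IsOpen U) (hq : q ∈ U) (hu : ContDiffOn ℝ 3 u U)
    (hf : ContDiff ℝ 1 f)
    (hpde : ∀ p ∈ U, pdx (pdx u) p + pdy (pdy u) p = -f (u p))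
    (hx : pdx u q = 0) (hxx : pdx (pdx u) q = 0) (hxy : pdy (pdx u) q = 0) :
    jdet (Tvec u) q =
      -(pdy u q) ^ 2 * ((pdy (pdx (pdx u)) q) ^ 2 + (pdx (pdx (pdx u)) q) ^ 2) ∧
    jdet (Tvec u) q ≤ 0 ∧
    (jdet (Tvec u) q < 0 ↔
      pdy u q ≠ 0 ∧ (pdx (pdx (pdx u)) q, pdy (pdx (pdx u)) q) ≠ (0, 0)) := by
  have hU_nhds : U ∈ 𝓝 q := hU.mem_nhds hq
  have hu3 : ContDiffAt ℝ 3 u q := hu.contDiffAt hU_nhds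
  have hxxy : pdx (pdy (pdx u)) q = pdy (pdx (pdx u)) q := pdx_pdy_comm hu3.pdx
  have hxyy : pdy (pdy (pdx u)) q = -pdx (pdx (pdx u)) q := by
    have hlap := pdx_laplacian_eq hu3 (hf.differentiable one_ne_zero (u q))
      (eventually_of_mem hU_nhds hpde)
    rw [hx, ← pdy_pdy_pdx_eq_pdx_pdy_pdy hu3] at hlap
    linarith
  have hdet : jdet (Tvec u) q =
      -(pdy u q) ^ 2 * ((pdy (pdx (pdx u)) q) ^ 2 + (pdx (pdx (pdx u)) q) ^ 2) := by
    rw [jdet_Tvec_of_pdx_eq_zero hu3 hx hxx hxy, hxxy, hxyy]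
    ring
  exact ⟨hdet, hdet ▸ neg_sq_mul_sq_add_sq_nonpos _ _ _, hdet ▸ neg_sq_mul_sq_add_sq_neg_iff⟩
end
end

section
/- Let Ω ⊂ {(x,y) ∈ ℝ² : y < 0} be an open, bounded domain with smooth boundary with outward unit normal ν, tangent to the x-axis at the origin 0 = (0,0), and let u ∈ C²(cl Ω) satisfy u = 0 on ∂Ω and ⟨∇u(q), ν(q)⟩ < 0 for every q ∈ ∂Ω. Let p ∈ Ω be such that ⟨q − p, ν(q)⟩ > 0 for every q ∈ ∂Ω. Assume the level-set curvature 𝔎 satisfies 𝔎(0) = 0 and 𝔎(q) > 0 for every q ∈ ∂Ω \ {0}, and assume u_xy(0) ≠ 0. Then for every t ∈ [0,1] and every q ∈ ∂Ω, t T(q) + (1 − t)(q − p) ≠ 0. -/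
open Real Set MeasureTheory

noncomputable section

/-! Since `u` vanishes on `∂Ω ⊆ {ρ = 0}`, Lagrange multipliers make `∇u` a negative multiple of `ν`
on `∂Ω`, so star-shapedness gives `⟨q - p, ∇u⟩ < 0`, while `⟨T, ∇u⟩ = -𝔎 |∇u|³ ≤ 0`. Pairing
`t T + (1 - t) (q - p) = 0` with `∇u` therefore forces `t = 1` and `T(q) = 0`. Away from the origin
this contradicts `𝔎 > 0`; at the origin `u_x = 0 ≠ u_y`, so `T₁ = -u_xy u_y ≠ 0`. -/

open Topology Filter

variable {E : Type*} [NormedAddCommGroup E] [NormedSpace ℝ E]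

theorem mem_frontier_setOf_neg_of_fderiv_ne_zero {ρ : E → ℝ} {x : E} (hx : ρ x = 0)
    (hρx : fderiv ℝ ρ x ≠ 0) : x ∈ frontier {y | ρ y < 0} := by
  refine ⟨?_, fun hint => absurd (interior_subset hint) (by simp [hx])⟩
  rw [mem_closure_iff_frequently]
  by_contra hcl
  apply hρx
  refine IsLocalMin.fderiv_eq_zero ?_
  filter_upwards [not_frequently.mp hcl] with y hy
  simpa [hx] using hy

/-- Lagrange multipliers: `u` vanishes on the hypersurface `{ρ = 0}`, which near a regular point
of `ρ` is part of the frontier of `{ρ < 0}`. -/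
theorem exists_eq_smul_fderiv_of_eq_zero_on_frontier [CompleteSpace E] {ρ u : E → ℝ}
    {u' : StrongDual ℝ E} {x : E} (hρ : ContDiff ℝ 1 ρ) (hu : HasStrictFDerivAt u u' x)
    (hu0 : ∀ y ∈ frontier {y | ρ y < 0}, u y = 0) (hx : x ∈ frontier {y | ρ y < 0})
    (hρx : fderiv ℝ ρ x ≠ 0) : ∃ c : ℝ, u' = c • fderiv ℝ ρ x := by
  have hρ0 : ρ x = 0 := frontier_lt_subset_eq hρ.continuous continuous_const hx
  have hregular : ∀ᶠ y in 𝓝 x, fderiv ℝ ρ y ≠ 0 :=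
    (hρ.continuous_fderiv one_ne_zero).continuousAt.eventually_ne hρx
  have hextr : IsLocalExtrOn u {y | ρ y = ρ x} x := by
    refine Or.inl ?_
    filter_upwards [nhdsWithin_le_nhds hregular, self_mem_nhdsWithin] with y hy hys
    have hy0 : ρ y = 0 := hys.trans hρ0
    rw [hu0 x hx, hu0 y (mem_frontier_setOf_neg_of_fderiv_ne_zero hy0 hy)]
  obtain ⟨a, b, hab, hcomb⟩ :=
    hextr.exists_multipliers_of_hasStrictFDerivAt_1d
      (hρ.contDiffAt.hasStrictFDerivAt one_ne_zero) hu
  have hb : b ≠ 0 := by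
    rintro rfl
    have ha : a ≠ 0 := by simpa using hab
    simp_all
  refine ⟨-(a / b), ?_⟩
  rw [← inv_smul_smul₀ hb u', eq_neg_of_add_eq_zero_right hcomb, smul_neg, smul_smul, neg_smul,
    div_eq_inv_mul]

theorem sq_add_sq_pos_of_mul_add_mul_neg {a b x y : ℝ} (h : a * x + b * y < 0) :
    0 < a ^ 2 + b ^ 2 := by
  by_contra hab
  have ha : a = 0 := by nlinarith
  have hb : b = 0 := by nlinarith
  simp [ha, hb] at h

theorem fderiv_apply_eq_pdx_pdy (u : ℝ × ℝ → ℝ) (q v : ℝ × ℝ) :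
    fderiv ℝ u q v = v.1 * pdx u q + v.2 * pdy u q := by
  have hv : v = v.1 • ((1, 0) : ℝ × ℝ) + v.2 • ((0, 1) : ℝ × ℝ) := by simp
  rw [hv, map_add, map_smul, map_smul]
  simp [pdx, pdy]

theorem fderiv_apply_Tvec (u : ℝ × ℝ → ℝ) (q : ℝ × ℝ) (hq : 0 < pdx u q ^ 2 + pdy u q ^ 2) :
    fderiv ℝ u q (Tvec u q) = -crv u q * √(pdx u q ^ 2 + pdy u q ^ 2) ^ 3 := by
  have hsqrt : √(pdx u q ^ 2 + pdy u q ^ 2) ^ 3 ≠ 0 := (pow_pos (Real.sqrt_pos.mpr hq) 3).ne'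
  rw [fderiv_apply_eq_pdx_pdy, crv, neg_div, neg_neg, div_mul_cancel₀ _ hsqrt, Tvec]
  ring

theorem fderiv_apply_Tvec_nonpos (u : ℝ × ℝ → ℝ) (q : ℝ × ℝ) (hcrv : 0 ≤ crv u q) :
    fderiv ℝ u q (Tvec u q) ≤ 0 := by
  rcases (add_nonneg (sq_nonneg (pdx u q)) (sq_nonneg (pdy u q))).eq_or_lt with hgrad | hgrad
  · have hux : pdx u q = 0 := by nlinarith
    have huy : pdy u q = 0 := by nlinarith
    simp [fderiv_apply_eq_pdx_pdy, Tvec, hux, huy]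
  · rw [fderiv_apply_Tvec u q hgrad]
    exact mul_nonpos_of_nonpos_of_nonneg (neg_nonpos.mpr hcrv) (by positivity)

theorem fderiv_apply_Tvec_neg (u : ℝ × ℝ → ℝ) (q : ℝ × ℝ) (hgrad : 0 < pdx u q ^ 2 + pdy u q ^ 2)
    (hcrv : 0 < crv u q) : fderiv ℝ u q (Tvec u q) < 0 := by
  rw [fderiv_apply_Tvec u q hgrad, neg_mul, neg_lt_zero]
  exact mul_pos hcrv (pow_pos (Real.sqrt_pos.mpr hgrad) 3)

theorem Tvec_ne_zero_of_pdx_eq_zero {u : ℝ × ℝ → ℝ} {q : ℝ × ℝ} (hx : pdx u q = 0)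
    (hy : pdy u q ≠ 0) (hxy : pdy (pdx u) q ≠ 0) : Tvec u q ≠ 0 := by
  intro hT
  have hT1 : pdy (pdy u) q * pdx u q - pdy (pdx u) q * pdy u q = 0 := congrArg Prod.fst hT
  rw [hx, mul_zero, zero_sub, neg_eq_zero] at hT1
  exact mul_ne_zero hxy hy hT1

theorem exists_neg_grad_eq_smul_normal {ρ u : ℝ × ℝ → ℝ} {n q : ℝ × ℝ} (hρ : ContDiff ℝ 1 ρ)
    (hu : HasStrictFDerivAt u (fderiv ℝ u q) q) (hu0 : ∀ y ∈ frontier {y | ρ y < 0}, u y = 0)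
    (hq : q ∈ frontier {y | ρ y < 0}) (hρq : ((pdx ρ q, pdy ρ q) : ℝ × ℝ) ≠ 0)
    (hn : n = ‖((pdx ρ q, pdy ρ q) : ℝ × ℝ)‖⁻¹ • ((pdx ρ q, pdy ρ q) : ℝ × ℝ))
    (hHopf : pdx u q * n.1 + pdy u q * n.2 < 0) :
    ∃ c < 0, pdx u q = c * n.1 ∧ pdy u q = c * n.2 := by
  have hρq' : fderiv ℝ ρ q ≠ 0 := fun h => hρq (by simp [pdx, pdy, h])
  obtain ⟨c, hc⟩ := exists_eq_smul_fderiv_of_eq_zero_on_frontier hρ hu hu0 hq hρq'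
  have hnorm : ‖((pdx ρ q, pdy ρ q) : ℝ × ℝ)‖ ≠ 0 := norm_ne_zero_iff.mpr hρq
  set r := ‖((pdx ρ q, pdy ρ q) : ℝ × ℝ)‖
  have hux : pdx u q = c * r * n.1 := by
    rw [hn]
    simp only [pdx, hc, smul_apply, smul_eq_mul, Prod.smul_mk]
    field_simp
  have huy : pdy u q = c * r * n.2 := by
    rw [hn]
    simp only [pdy, hc, smul_apply, smul_eq_mul, Prod.smul_mk]
    field_simp
  refine ⟨c * r, ?_, hux, huy⟩
  rw [hux, huy] at hHopf
  by_contra h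
  nlinarith [mul_nonneg (not_lt.mp h) (add_nonneg (sq_nonneg n.1) (sq_nonneg n.2))]

theorem eq_one_of_smul_add_one_sub_smul_eq_zero {M : Type*} [AddCommGroup M] [Module ℝ M]
    (L : M →ₗ[ℝ] ℝ) {v w : M} {t : ℝ} (hv : L v ≤ 0) (hw : L w < 0) (ht : t ∈ Icc (0 : ℝ) 1)
    (h : t • v + (1 - t) • w = 0) : t = 1 := by
  have hL : t * L v + (1 - t) * L w = 0 := by simpa using congrArg L h
  nlinarith [mul_nonpos_of_nonneg_of_nonpos ht.1 hv, ht.2]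

theorem homotopy_admissible_flat_point_general
    (Ω : Set (ℝ × ℝ)) (u : ℝ × ℝ → ℝ) (ρ : ℝ × ℝ → ℝ) (ν : ℝ × ℝ → ℝ × ℝ)
    (p : ℝ × ℝ)
    -- `Ω` has smooth boundary with outward unit normal `ν`
    (hρ : ContDiff ℝ (⊤ : ℕ∞) ρ) (hΩρ : Ω = {q : ℝ × ℝ | ρ q < 0})
    (hρgrad : ∀ q ∈ frontier Ω, ((pdx ρ q, pdy ρ q) : ℝ × ℝ) ≠ 0)
    (hν : ∀ q ∈ frontier Ω,
      ν q = ‖((pdx ρ q, pdy ρ q) : ℝ × ℝ)‖⁻¹ • ((pdx ρ q, pdy ρ q) : ℝ × ℝ))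
    -- `∂Ω` is tangent to the x-axis at the origin
    (hν0 : ν ((0, 0) : ℝ × ℝ) = ((0, 1) : ℝ × ℝ))
    -- `u ∈ C²(cl Ω)`, `u = 0` and `u_ν < 0` on `∂Ω`
    (hu : ∃ V : Set (ℝ × ℝ), IsOpen V ∧ closure Ω ⊆ V ∧ ContDiffOn ℝ 2 u V)
    (hu0 : ∀ q ∈ frontier Ω, u q = 0)
    (hHopf : ∀ q ∈ frontier Ω, pdx u q * (ν q).1 + pdy u q * (ν q).2 < 0)
    -- `Ω` is strictly star-shaped with respect to `p ∈ Ω`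
    (hstar : ∀ q ∈ frontier Ω,
      0 < (q.1 - p.1) * (ν q).1 + (q.2 - p.2) * (ν q).2)
    -- curvature vanishes only at the origin
    (hcurv0 : crv u ((0, 0) : ℝ × ℝ) = 0)
    (hcurv : ∀ q ∈ frontier Ω, q ≠ ((0, 0) : ℝ × ℝ) → 0 < crv u q)
    (hxy0 : pdy (pdx u) ((0, 0) : ℝ × ℝ) ≠ 0) :
    ∀ t ∈ Set.Icc (0 : ℝ) 1, ∀ q ∈ frontier Ω,
      t • Tvec u q + (1 - t) • (q - p) ≠ (0 : ℝ × ℝ) := by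
  intro t ht q hq hzero
  subst hΩρ
  obtain ⟨V, hV, hΩV, huV⟩ := hu
  have hstrict : HasStrictFDerivAt u (fderiv ℝ u q) q :=
    (huV.contDiffAt (hV.mem_nhds (hΩV (frontier_subset_closure hq)))).hasStrictFDerivAt
      two_ne_zero
  obtain ⟨c, hc, hux, huy⟩ := exists_neg_grad_eq_smul_normal (hρ.of_le (by simp)) hstrict hu0 hq
    (hρgrad q hq) (hν q hq) (hHopf q hq)
  have hT : fderiv ℝ u q (Tvec u q) ≤ 0 := by
    refine fderiv_apply_Tvec_nonpos u q ?_
    rcases eq_or_ne q (0, 0) with rfl | hq0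
    exacts [hcurv0.ge, (hcurv q hq hq0).le]
  have hw : fderiv ℝ u q (q - p) < 0 := by
    rw [fderiv_apply_eq_pdx_pdy, hux, huy, Prod.fst_sub, Prod.snd_sub]
    linarith [mul_neg_of_neg_of_pos hc (hstar q hq)]
  obtain rfl : t = 1 :=
    eq_one_of_smul_add_one_sub_smul_eq_zero (fderiv ℝ u q : ℝ × ℝ →ₗ[ℝ] ℝ) hT hw ht hzero
  have hT0 : Tvec u q = 0 := by simpa using hzero
  rcases eq_or_ne q (0, 0) with rfl | hq0
  · refine Tvec_ne_zero_of_pdx_eq_zero ?_ ?_ hxy0 hT0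
    · rw [hux, hν0, mul_zero]
    · rw [huy, hν0, mul_one]
      exact hc.ne
  · have hgrad := sq_add_sq_pos_of_mul_add_mul_neg (hHopf q hq)
    exact (fderiv_apply_Tvec_neg u q hgrad (hcurv q hq hq0)).ne (by rw [hT0, map_zero])

/-- admissibility of the homotopy `tT + (1−t)(· − p)` on the
boundary when the curvature vanishes exactly at the tangency point `0` and
`u_xy(0) ≠ 0`. -/
theorem homotopy_admissible_flat_point
    (Ω : Set (ℝ × ℝ)) (u : ℝ × ℝ → ℝ) (ρ : ℝ × ℝ → ℝ) (ν : ℝ × ℝ → ℝ × ℝ)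
    (p : ℝ × ℝ)
    (hΩopen : IsOpen Ω) (hΩne : Ω.Nonempty) (hΩbd : Bornology.IsBounded Ω)
    (hΩhalf : Ω ⊆ {q : ℝ × ℝ | q.2 < 0})
    -- `Ω` has smooth boundary with outward unit normal `ν`
    (hρ : ContDiff ℝ (⊤ : ℕ∞) ρ) (hΩρ : Ω = {q : ℝ × ℝ | ρ q < 0})
    (hρgrad : ∀ q ∈ frontier Ω, ((pdx ρ q, pdy ρ q) : ℝ × ℝ) ≠ 0)
    (hν : ∀ q ∈ frontier Ω,
      ν q = ‖((pdx ρ q, pdy ρ q) : ℝ × ℝ)‖⁻¹ • ((pdx ρ q, pdy ρ q) : ℝ × ℝ))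
    -- `∂Ω` is tangent to the x-axis at the origin
    (h0bd : ((0, 0) : ℝ × ℝ) ∈ frontier Ω)
    (hν0 : ν ((0, 0) : ℝ × ℝ) = ((0, 1) : ℝ × ℝ))
    -- `u ∈ C²(cl Ω)`, `u = 0` and `u_ν < 0` on `∂Ω`
    (hu : ∃ V : Set (ℝ × ℝ), IsOpen V ∧ closure Ω ⊆ V ∧ ContDiffOn ℝ 2 u V)
    (hu0 : ∀ q ∈ frontier Ω, u q = 0)
    (hHopf : ∀ q ∈ frontier Ω, pdx u q * (ν q).1 + pdy u q * (ν q).2 < 0)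
    -- `Ω` is strictly star-shaped with respect to `p ∈ Ω`
    (hp : p ∈ Ω)
    (hstar : ∀ q ∈ frontier Ω,
      0 < (q.1 - p.1) * (ν q).1 + (q.2 - p.2) * (ν q).2)
    -- curvature vanishes only at the origin
    (hcurv0 : crv u ((0, 0) : ℝ × ℝ) = 0)
    (hcurv : ∀ q ∈ frontier Ω, q ≠ ((0, 0) : ℝ × ℝ) → 0 < crv u q)
    (hxy0 : pdy (pdx u) ((0, 0) : ℝ × ℝ) ≠ 0) :
    ∀ t ∈ Set.Icc (0 : ℝ) 1, ∀ q ∈ frontier Ω,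
      t • Tvec u q + (1 - t) • (q - p) ≠ (0 : ℝ × ℝ) :=
  homotopy_admissible_flat_point_general Ω u ρ ν p hρ hΩρ hρgrad hν hν0 hu hu0 hHopf hstar hcurv0
    hcurv hxy0
end
end
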